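/- Let U = ⊕_{k=1}^m J^{(k)}e_k ⊆ S^m_d be a quasi-stable monomial module such that every ideal J^{(k)} is saturated (i.e. J^{(k)} = (J^{(k)} : (x_0,…,x_n)^∞)), let r(U) be the maximal degree of an element of P(U), and let G be a P(U)-marked set. Then G is a P(U)-marked basis if and only if N(U,⟨G⟩)_{r(U)+1} = {0}, equivalently if and only if ⟨G⟩_{r(U)+1} = ⟨G^{(r(U)+1)}⟩^A. -/

import Mathlib

/-!
The multiplicative multiples `x^δ g_α e_k` (`δ` involving only multiplicative variables of `x^α`)
are triangular with respect to the colex order on `δ`, their head terms `x^{δ+α} e_k` being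
exactly the terms of `U`, each once. Hence they are `A`-linearly independent modulo `⟨N(U)⟩`,
and reducing by them gives `(S^m_d)_s = ⟨G^(s)⟩^A + ⟨N(U)_s⟩^A` in every degree; so `G` is a
marked basis as soon as `⟨G⟩_s = ⟨G^(s)⟩^A` for all `s`.

Since the `J^(k)` are saturated, multiplication by `x_0^(r+1-s)` embeds `N(U,⟨G⟩)_s` into
`N(U,⟨G⟩)_{r+1}`, so the hypothesis in degree `r+1` kills `N(U,⟨G⟩)_s` for all `s ≤ r+1`. Then
every `x_j g_α e_k` (of degree at most `r+1`) is a combination of multiplicative multiples, and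
an induction along the colex order shows that all of `⟨G⟩` is, which gives `⟨G⟩_s = ⟨G^(s)⟩^A`
in every degree.
-/

open MvPolynomial

namespace MB

/-- Exponent (multi-index) of a term in the variables `x_0, …, x_n`. -/
abbrev Exp (n : ℕ) := Fin (n+1) →₀ ℕ

variable {n : ℕ}

/-- Total degree of a term. -/
def degE (α : Exp n) : ℕ := α.sum fun _ e => e

/-- `x_i` is a multiplicative variable for the term `x^α`, i.e. `x_i ≤ min(x^α)`. -/
def mult (α : Exp n) (i : Fin (n+1)) : Prop := ∀ j ∈ α.support, i ≤ j

/-- Every variable occurring in `x^δ` is multiplicative for `x^α`. -/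
def multExp (α δ : Exp n) : Prop := ∀ i ∈ δ.support, mult α i

/-- Pommaret cone of a term. -/
def pommaretCone (α : Exp n) : Set (Exp n) := {γ | ∃ δ, multExp α δ ∧ γ = α + δ}

/-- A set of terms is (the set of terms of) a monomial ideal. -/
def IsMonomialIdeal (T : Set (Exp n)) : Prop := ∀ α ∈ T, ∀ β, α + β ∈ T

/-- `P` is a Pommaret basis of the set of terms `T`: the terms of `T` are the
disjoint union of the Pommaret cones of the elements of `P`. -/
def IsPommaretBasis (P : Finset (Exp n)) (T : Set (Exp n)) : Prop :=
  (∀ γ, γ ∈ T ↔ ∃ α ∈ P, γ ∈ pommaretCone α) ∧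
  ∀ γ : Exp n, ∀ α ∈ P, ∀ β ∈ P, γ ∈ pommaretCone α → γ ∈ pommaretCone β → α = β

/-- Lexicographic order on terms (with `x_n > … > x_0` significance). -/
def lexLt (η δ : Exp n) : Prop := ∃ i, η i < δ i ∧ ∀ j, i < j → η j = δ j

/-- Terms of the saturation `(J : (x_0,…,x_n)^∞)` of a monomial ideal. -/
def satTerms (T : Set (Exp n)) : Set (Exp n) :=
  {α | ∃ j : ℕ, ∀ β : Exp n, degE β = j → α + β ∈ T}

section ModuleDefs

variable (A : Type*) [CommRing A] {κ : Type*} [Fintype κ] [DecidableEq κ]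

/-- The term `x^α e_k` of the free module. -/
noncomputable def termV (α : Exp n) (k : κ) : κ → MvPolynomial (Fin (n+1)) A :=
  Pi.single k (monomial α 1)

variable {A}

/-- Homogeneity of degree `s` in `S^m_d` (with weight vector `d`). -/
def IsHomogV (d : κ → ℤ) (f : κ → MvPolynomial (Fin (n+1)) A) (s : ℤ) : Prop :=
  ∀ k, ∀ β ∈ (f k).support, (degE β : ℤ) + d k = s

variable (A)

/-- The degree-`s` component `(S^m_d)_s` as an `A`-submodule. -/
noncomputable def homogCompV (d : κ → ℤ) (s : ℤ) :
    Submodule A (κ → MvPolynomial (Fin (n+1)) A) where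
  carrier := {f | IsHomogV d f s}
  add_mem' := by
    intro f g hf hg k β hβ
    rcases Finset.mem_union.mp (MvPolynomial.support_add hβ) with h | h
    · exact hf k β h
    · exact hg k β h
  zero_mem' := by intro k β hβ; simp at hβ
  smul_mem' := by
    intro a f hf k β hβ
    exact hf k β (MvPolynomial.support_smul hβ)

/-- The set `N(U)` of terms of `S^m_d` not belonging to the monomial module `U = ⊕ J^(k) e_k`. -/
def NUTerms (J : κ → Set (Exp n)) : Set (κ → MvPolynomial (Fin (n+1)) A) :=
  {v | ∃ k, ∃ α, α ∉ J k ∧ v = termV A α k}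

/-- The degree-`s` part `N(U)_s`. -/
def NUTermsDeg (d : κ → ℤ) (J : κ → Set (Exp n)) (s : ℤ) :
    Set (κ → MvPolynomial (Fin (n+1)) A) :=
  {v | ∃ k, ∃ α, α ∉ J k ∧ (degE α : ℤ) + d k = s ∧ v = termV A α k}

variable {A}

/-- A `P(U)`-marked set: for each `x^α e_k` with `α ∈ P k`, the element `g α k` has
head term `x^α e_k` (coefficient `1`) and all other terms in `N(U)` of the same degree. -/
def IsMarkedSetV (d : κ → ℤ) (J : κ → Set (Exp n)) (P : κ → Finset (Exp n))
    (g : Exp n → κ → (κ → MvPolynomial (Fin (n+1)) A)) : Prop :=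
  ∀ k, ∀ α ∈ P k, ∀ l, ∀ β ∈ ((g α k - termV A α k) l).support,
    β ∉ J l ∧ (degE β : ℤ) + d l = (degE α : ℤ) + d k

/-- The underlying set of elements of the marked set `G`. -/
def GSet (P : κ → Finset (Exp n)) (g : Exp n → κ → (κ → MvPolynomial (Fin (n+1)) A)) :
    Set (κ → MvPolynomial (Fin (n+1)) A) :=
  {v | ∃ k, ∃ α ∈ P k, v = g α k}

/-- The set `G^(s)` of multiplicative multiples of elements of `G` of degree `s`. -/
def GSdeg (d : κ → ℤ) (P : κ → Finset (Exp n))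
    (g : Exp n → κ → (κ → MvPolynomial (Fin (n+1)) A)) (s : ℤ) :
    Set (κ → MvPolynomial (Fin (n+1)) A) :=
  {v | ∃ k, ∃ α ∈ P k, ∃ δ : Exp n, multExp α δ ∧
    (degE δ : ℤ) + (degE α : ℤ) + d k = s ∧ v = (monomial δ (1:A)) • g α k}

/-- The `S`-submodule `⟨G⟩` generated by the marked set. -/
noncomputable def GmodS (P : κ → Finset (Exp n))
    (g : Exp n → κ → (κ → MvPolynomial (Fin (n+1)) A)) :
    Submodule (MvPolynomial (Fin (n+1)) A) (κ → MvPolynomial (Fin (n+1)) A) :=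
  Submodule.span _ (GSet P g)

/-- The degree-`s` component `⟨G⟩_s` as an `A`-submodule. -/
noncomputable def GmodDeg (d : κ → ℤ) (P : κ → Finset (Exp n))
    (g : Exp n → κ → (κ → MvPolynomial (Fin (n+1)) A)) (s : ℤ) :
    Submodule A (κ → MvPolynomial (Fin (n+1)) A) :=
  (GmodS P g).restrictScalars A ⊓ homogCompV A d s

/-- `G` is a marked basis: `(S^m_d)_s = ⟨G⟩_s ⊕ ⟨N(U)_s⟩^A` for every degree `s`. -/
def MarkedBasisProp (d : κ → ℤ) (J : κ → Set (Exp n)) (P : κ → Finset (Exp n))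
    (g : Exp n → κ → (κ → MvPolynomial (Fin (n+1)) A)) : Prop :=
  ∀ s : ℤ,
    homogCompV A d s = GmodDeg d P g s ⊔ Submodule.span A (NUTermsDeg A d J s) ∧
    GmodDeg d P g s ⊓ Submodule.span A (NUTermsDeg A d J s) = ⊥

/-- One step of the reduction relation `→_G`. -/
def RedStep (P : κ → Finset (Exp n)) (g : Exp n → κ → (κ → MvPolynomial (Fin (n+1)) A))
    (h h' : κ → MvPolynomial (Fin (n+1)) A) : Prop :=
  ∃ k, ∃ α ∈ P k, ∃ η : Exp n, multExp α η ∧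
    (h k).coeff (η + α) ≠ 0 ∧
    h' = h - ((h k).coeff (η + α)) • ((monomial η (1:A)) • g α k)

end ModuleDefs

section IdealDefs

variable {A : Type*} [CommRing A]

/-- A `P(J)`-marked set of polynomials. -/
def IsMarkedSetI (T : Set (Exp n)) (P : Finset (Exp n))
    (g : Exp n → MvPolynomial (Fin (n+1)) A) : Prop :=
  ∀ α ∈ P, ∀ β ∈ (g α - monomial α (1:A)).support, β ∉ T ∧ degE β = degE α

variable (A)

/-- The degree-`s` monomials not in `T`. -/
def NTermsDegI (T : Set (Exp n)) (s : ℕ) : Set (MvPolynomial (Fin (n+1)) A) :=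
  {p | ∃ β, β ∉ T ∧ degE β = s ∧ p = monomial β (1:A)}

variable {A}

/-- Degree-`s` part of the ideal generated by the marked set. -/
noncomputable def IdealDegI (P : Finset (Exp n)) (g : Exp n → MvPolynomial (Fin (n+1)) A)
    (s : ℕ) : Submodule A (MvPolynomial (Fin (n+1)) A) :=
  (Ideal.span (g '' ↑P)).restrictScalars A ⊓ homogeneousSubmodule (Fin (n+1)) A s

/-- A `P(J)`-marked basis of polynomials: `S_s = (G)_s ⊕ ⟨N(J)_s⟩^A` for all `s`. -/
def IsMarkedBasisI (T : Set (Exp n)) (P : Finset (Exp n))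
    (g : Exp n → MvPolynomial (Fin (n+1)) A) : Prop :=
  IsMarkedSetI T P g ∧ ∀ s : ℕ,
    homogeneousSubmodule (Fin (n+1)) A s
      = IdealDegI P g s ⊔ Submodule.span A (NTermsDegI A T s) ∧
    IdealDegI P g s ⊓ Submodule.span A (NTermsDegI A T s) = ⊥

/-- The polynomial `p` involves only multiplicative variables of `x^α`. -/
def multPoly (α : Exp n) (p : MvPolynomial (Fin (n+1)) A) : Prop :=
  ∀ β ∈ p.support, multExp α β

end IdealDefs

section SyzDefs

variable {A : Type*} [CommRing A]

/-- The map `(c_l) ↦ Σ_l c_l f_{α(l)}` whose kernel is `Syz(G)`. -/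
noncomputable def syzMap (P : Finset (Exp n)) (g : Exp n → MvPolynomial (Fin (n+1)) A) :
    (↥P → MvPolynomial (Fin (n+1)) A) →ₗ[MvPolynomial (Fin (n+1)) A]
      MvPolynomial (Fin (n+1)) A where
  toFun c := ∑ l : ↥P, c l * g l.1
  map_add' c c' := by simp [add_mul, Finset.sum_add_distrib]
  map_smul' a c := by simp [Finset.mul_sum, mul_assoc]

/-- Weight vector for the syzygy module: `d_l = deg x^{α(l)}`. -/
def ddeg (P : Finset (Exp n)) : ↥P → ℤ := fun l => (degE l.1 : ℤ)

/-- Terms of the monomial ideal generated by the nonmultiplicative variables of `x^{α(l)}`. -/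
def Jsyz (P : Finset (Exp n)) : ↥P → Set (Exp n) :=
  fun l => {β | ∃ i ∈ β.support, ¬ mult (l : Exp n) i}

open Classical in
/-- The claimed Pommaret basis `{x_i e_l : x_i nonmultiplicative for x^{α(l)}}`. -/
noncomputable def Psyz (P : Finset (Exp n)) : ↥P → Finset (Exp n) := fun l =>
  (Finset.univ.filter fun i : Fin (n+1) => ¬ mult (l : Exp n) i).image
    fun i => Finsupp.single i 1

open Classical in
/-- The syzygy `S_{k;i} = x_i e_k − Σ_l P_l^{k;i} e_l`. -/
noncomputable def Ssyz (P : Finset (Exp n))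
    (Pc : ↥P → Fin (n+1) → ↥P → MvPolynomial (Fin (n+1)) A)
    (k : ↥P) (i : Fin (n+1)) : ↥P → MvPolynomial (Fin (n+1)) A :=
  fun l => (if l = k then (X i : MvPolynomial (Fin (n+1)) A) else 0) - Pc k i l

/-- The set `G_Syz^(s)`. -/
def GSyzDeg (P : Finset (Exp n))
    (Pc : ↥P → Fin (n+1) → ↥P → MvPolynomial (Fin (n+1)) A) (s : ℤ) :
    Set (↥P → MvPolynomial (Fin (n+1)) A) :=
  {v | ∃ k : ↥P, ∃ i : Fin (n+1), ¬ mult (k : Exp n) i ∧ ∃ δ : Exp n,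
    (∀ j ∈ δ.support, j ≤ i) ∧ (degE δ : ℤ) + 1 + ddeg P k = s ∧
    v = (monomial δ (1:A)) • Ssyz P Pc k i}

end SyzDefs

section Exponents

lemma degE_eq_degree (α : Exp n) : degE α = α.degree := rfl

lemma degE_add (α β : Exp n) : degE (α + β) = degE α + degE β := by
  simp only [degE_eq_degree, map_add]

lemma multExp_zero (α : Exp n) : multExp α 0 := by
  simp [multExp]

lemma mem_pommaretCone_self (α : Exp n) : α ∈ pommaretCone α :=
  ⟨0, multExp_zero α, (add_zero α).symm⟩

lemma IsPommaretBasis.mem {P : Finset (Exp n)} {T : Set (Exp n)} (hP : IsPommaretBasis P T)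
    {α : Exp n} (hα : α ∈ P) : α ∈ T :=
  (hP.1 α).2 ⟨α, hα, mem_pommaretCone_self α⟩

lemma IsMonomialIdeal.mem_of_le {T : Set (Exp n)} (hT : IsMonomialIdeal T) {α β : Exp n}
    (hα : α ∈ T) (h : α ≤ β) : β ∈ T := by
  simpa [add_tsub_cancel_of_le h] using hT α hα (β - α)

lemma exists_add_of_add_eq_of_toColex_lt {δ β δ' α' : Exp n} (hsum : δ + β = δ' + α')
    (hm : multExp α' δ') (hlt : toColex δ < toColex δ') :
    ∃ ε, ε ≠ 0 ∧ multExp α' ε ∧ β = α' + ε := by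
  obtain ⟨i, habove, hi⟩ := Finsupp.Colex.lt_iff.1 hlt
  have hpt : ∀ l, δ l + β l = δ' l + α' l := fun l => by
    simpa using DFunLike.congr_fun hsum l
  have habove' : ∀ l, i < l → δ l = δ' l := habove
  have hi' : δ i < δ' i := hi
  have hmi : mult α' i := hm i (Finsupp.mem_support_iff.2 (by omega))
  have hbelow : ∀ l, l < i → α' l = 0 := fun l hl => by
    by_contra h
    exact absurd (hmi l (Finsupp.mem_support_iff.2 h)) (not_le.2 hl)
  have hle : α' ≤ β := fun l => by
    rcases lt_trichotomy l i with hl | rfl | hl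
    · simp [hbelow l hl]
    · have := hpt l; omega
    · have := hpt l; have := habove' l hl; omega
  refine ⟨β - α', fun h => ?_, fun l hl m hm' => ?_, (add_tsub_cancel_of_le hle).symm⟩
  · have h0 := DFunLike.congr_fun h i
    simp only [Finsupp.coe_tsub, Pi.sub_apply, Finsupp.coe_zero, Pi.zero_apply] at h0
    have := hpt i
    omega
  · refine le_trans ?_ (hmi m hm')
    by_contra hli
    have := hpt l
    have := habove' l (not_le.1 hli)
    simp only [Finsupp.mem_support_iff, Finsupp.coe_tsub, Pi.sub_apply] at hl
    omega

lemma toColex_lt_of_add_eq_of_notMem {T : Set (Exp n)} (hT : IsMonomialIdeal T)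
    {δ β δ' α' : Exp n} (hα' : α' ∈ T) (hsum : δ + β = δ' + α') (hm : multExp α' δ')
    (hβ : β ∉ T) : toColex δ' < toColex δ := by
  rcases lt_trichotomy (toColex δ) (toColex δ') with hlt | heq | hgt
  · obtain ⟨ε, -, -, rfl⟩ := exists_add_of_add_eq_of_toColex_lt hsum hm hlt
    exact absurd (hT α' hα' ε) hβ
  · obtain rfl : δ = δ' := toColex.injective heq
    exact absurd (add_left_cancel hsum ▸ hα') hβ
  · exact hgt

lemma IsPommaretBasis.toColex_lt_single {P : Finset (Exp n)} {T : Set (Exp n)}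
    (hP : IsPommaretBasis P T) {α α' δ' : Exp n} (hα : α ∈ P) (hα' : α' ∈ P) {j : Fin (n+1)}
    (hj : ¬ mult α j) (hm : multExp α' δ') (hsum : Finsupp.single j 1 + α = δ' + α') :
    toColex δ' < toColex (Finsupp.single j 1) := by
  rcases lt_trichotomy (toColex (Finsupp.single j 1)) (toColex δ') with hlt | heq | hgt
  · obtain ⟨ε, hε, hmε, rfl⟩ := exists_add_of_add_eq_of_toColex_lt hsum hm hlt
    have : α' + ε = α' :=
      hP.2 _ _ hα _ hα' (mem_pommaretCone_self _) ⟨ε, hmε, rfl⟩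
    exact absurd (by simpa using this) hε
  · obtain rfl : Finsupp.single j 1 = δ' := toColex.injective heq
    obtain rfl : α = α' := add_left_cancel hsum
    exact absurd (hm j (by simp)) hj
  · exact hgt

/-- For `u` beyond the degrees of `P`, the cone containing `x^β x_0^t x_i^u` must have `x_i`
multiplicative, so its generator is prime to `x_0` and already divides `x^β x_i^u`. -/
lemma add_single_mem_of_add_single_zero_mem {T : Set (Exp n)} {P : Finset (Exp n)}
    (hT : IsMonomialIdeal T) (hP : IsPommaretBasis P T) {β : Exp n} {t u : ℕ}
    {i : Fin (n+1)} (hi : i ≠ 0) (hu : P.sup degE < u)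
    (h : β + Finsupp.single 0 t ∈ T) : β + Finsupp.single i u ∈ T := by
  obtain ⟨α', hα', δ', hm, he⟩ := (hP.1 _).1 (hT _ h (Finsupp.single i u))
  have hpt : ∀ l, β l + Finsupp.single 0 t l + Finsupp.single i u l = α' l + δ' l :=
    fun l => by simpa using DFunLike.congr_fun he l
  have hα'i : α' i < u :=
    (Finsupp.le_degree i α').trans_lt ((Finset.le_sup hα').trans_lt hu)
  have hmi : mult α' i := hm i (Finsupp.mem_support_iff.2 (by
    have := hpt i
    simp only [Finsupp.single_eq_same, Finsupp.single_eq_of_ne hi] at this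
    omega))
  have hα'0 : α' 0 = 0 := by
    by_contra h0
    exact hi (le_antisymm (hmi 0 (Finsupp.mem_support_iff.2 h0)) (Fin.zero_le i))
  refine hT.mem_of_le (hP.mem hα') fun l => ?_
  rcases eq_or_ne l 0 with rfl | hl
  · simp [hα'0]
  · have := hpt l
    simp only [Finsupp.single_eq_of_ne hl, add_zero] at this
    simp only [Finsupp.coe_add, Pi.add_apply]
    omega

lemma mem_satTerms_of_add_single_zero_mem {T : Set (Exp n)} {P : Finset (Exp n)}
    (hT : IsMonomialIdeal T) (hP : IsPommaretBasis P T) {β : Exp n} {t : ℕ}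
    (h : β + Finsupp.single 0 t ∈ T) : β ∈ satTerms T := by
  set N := P.sup degE + 1
  refine ⟨(n+1) * (t + N), fun η hη => ?_⟩
  obtain ⟨i, -, hi⟩ : ∃ i ∈ Finset.univ, t + N ≤ η i := by
    refine Finset.exists_le_of_sum_le Finset.univ_nonempty ?_
    simp [← Finsupp.degree_eq_sum, ← degE_eq_degree, hη]
  have hsingle : β + Finsupp.single i (η i) ∈ T := by
    rcases eq_or_ne i 0 with rfl | hi0
    · exact hT.mem_of_le h (by gcongr; omega)
    · exact add_single_mem_of_add_single_zero_mem hT hP hi0 (by omega) h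
  exact hT.mem_of_le hsingle (by gcongr; exact Finsupp.single_le_iff.2 le_rfl)

lemma wellFounded_toColex :
    WellFounded (fun δ δ' : Exp n => toColex δ < toColex δ') :=
  wellFounded_lt.onFun

lemma toColex_tsub_single_add_lt {δ δ' : Exp n} {j : Fin (n+1)} (hj : j ∈ δ.support)
    (h : toColex δ' < toColex (Finsupp.single j 1)) :
    toColex (δ - Finsupp.single j 1 + δ') < toColex δ := by
  obtain ⟨i, habove, hi⟩ := Finsupp.Colex.lt_iff.1 h
  have habove' : ∀ l, i < l → δ' l = Finsupp.single j 1 l := habove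
  have hi' : δ' i < Finsupp.single j 1 i := hi
  obtain rfl : i = j := by
    by_contra hij
    simp [Finsupp.single_eq_of_ne hij] at hi'
  refine Finsupp.Colex.lt_iff.2 ⟨i, fun l hl => ?_, ?_⟩
  · have := habove' l hl
    simp only [Finsupp.single_eq_of_ne hl.ne'] at this
    change ((δ - Finsupp.single i 1 + δ' : Exp n) l) = δ l
    simp [Finsupp.single_eq_of_ne hl.ne', this]
  · change ((δ - Finsupp.single i 1 + δ' : Exp n) i) < δ i
    simp only [Finsupp.single_eq_same] at hi'
    simp only [Finsupp.mem_support_iff] at hj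
    simp only [Finsupp.coe_add, Finsupp.coe_tsub, Pi.add_apply, Pi.sub_apply,
      Finsupp.single_eq_same]
    omega

end Exponents

section FreeModule

variable {κ : Type*} {A : Type*} [CommRing A]

lemma coeff_termV [DecidableEq κ] (α β : Exp n) (k l : κ) :
    ((termV A α k) l).coeff β = if l = k ∧ β = α then 1 else 0 := by
  rcases eq_or_ne l k with rfl | hl
  · simp [termV, coeff_monomial, eq_comm]
  · simp [termV, hl]

lemma monomial_smul_termV [DecidableEq κ] (δ α : Exp n) (k : κ) :
    monomial δ (1:A) • termV A α k = termV A (δ + α) k := by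
  funext l
  rcases eq_or_ne l k with rfl | hl
  · simp [termV, monomial_mul]
  · simp [termV, hl]

lemma coeff_monomial_smul_add (δ β : Exp n) (v : κ → MvPolynomial (Fin (n+1)) A) (k : κ) :
    ((monomial δ (1:A) • v) k).coeff (δ + β) = (v k).coeff β := by
  rw [Pi.smul_apply, smul_eq_mul, coeff_monomial_mul, one_mul]

lemma exists_eq_add_of_coeff_monomial_smul_ne_zero {δ γ : Exp n}
    {v : κ → MvPolynomial (Fin (n+1)) A} {k : κ}
    (h : ((monomial δ (1:A) • v) k).coeff γ ≠ 0) : ∃ β, (v k).coeff β ≠ 0 ∧ γ = δ + β := by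
  rw [Pi.smul_apply, smul_eq_mul, coeff_monomial_mul'] at h
  split_ifs at h with hle
  · exact ⟨γ - δ, by simpa using h, (add_tsub_cancel_of_le hle).symm⟩
  · exact absurd rfl h

lemma mem_of_forall_termV_mem [Fintype κ] [DecidableEq κ]
    (V : Submodule A (κ → MvPolynomial (Fin (n+1)) A)) {v : κ → MvPolynomial (Fin (n+1)) A}
    (h : ∀ k β, (v k).coeff β ≠ 0 → termV A β k ∈ V) : v ∈ V := by
  let b := Pi.basis fun _ : κ => basisMonomials (Fin (n+1)) A
  refine Submodule.span_le.2 ?_ (b.mem_span_repr_support v)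
  rintro _ ⟨⟨k, β⟩, hkβ, rfl⟩
  have hcoeff : (v k).coeff β ≠ 0 := (Finsupp.mem_support_iff (f := b.repr v)).1 hkβ
  simpa [b, termV] using h k β hcoeff

lemma termV_mem_homogCompV [DecidableEq κ] (d : κ → ℤ) (α : Exp n) (k : κ) :
    termV A α k ∈ homogCompV A d (degE α + d k) := by
  intro l β hβ
  rw [MvPolynomial.mem_support_iff, coeff_termV] at hβ
  split_ifs at hβ with h
  · rw [h.1, h.2]
  · exact absurd rfl hβ

lemma monomial_smul_mem_homogCompV {d : κ → ℤ} (δ : Exp n) {v : κ → MvPolynomial (Fin (n+1)) A}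
    {s : ℤ} (hv : v ∈ homogCompV A d s) : monomial δ (1:A) • v ∈ homogCompV A d (degE δ + s) := by
  intro k γ hγ
  obtain ⟨β, hβ, rfl⟩ :=
    exists_eq_add_of_coeff_monomial_smul_ne_zero (MvPolynomial.mem_support_iff.1 hγ)
  have := hv k β (MvPolynomial.mem_support_iff.2 hβ)
  rw [degE_add]
  push_cast
  omega

lemma mem_span_NUTerms_iff [Fintype κ] [DecidableEq κ] {J : κ → Set (Exp n)}
    {v : κ → MvPolynomial (Fin (n+1)) A} :
    v ∈ Submodule.span A (NUTerms A J) ↔ ∀ k, ∀ γ ∈ J k, (v k).coeff γ = 0 := by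
  refine ⟨fun hv k γ hγ => ?_, fun h => mem_of_forall_termV_mem _ fun k β hβ =>
    Submodule.subset_span ⟨k, β, fun hJ => hβ (h k β hJ), rfl⟩⟩
  induction hv using Submodule.span_induction with
  | mem x hx =>
    obtain ⟨l, α, hα, rfl⟩ := hx
    rw [coeff_termV, if_neg]
    rintro ⟨rfl, rfl⟩
    exact hα hγ
  | zero => simp
  | add x y _ _ hx hy => simp [hx, hy]
  | smul a x _ hx => simp [hx]

lemma NUTermsDeg_subset_NUTerms [DecidableEq κ] (d : κ → ℤ) (J : κ → Set (Exp n)) (s : ℤ) :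
    NUTermsDeg A d J s ⊆ NUTerms A J := by
  rintro _ ⟨k, α, hα, -, rfl⟩
  exact ⟨k, α, hα, rfl⟩

lemma span_NUTermsDeg_eq [Fintype κ] [DecidableEq κ] (d : κ → ℤ) (J : κ → Set (Exp n)) (s : ℤ) :
    Submodule.span A (NUTermsDeg A d J s) = Submodule.span A (NUTerms A J) ⊓ homogCompV A d s := by
  refine le_antisymm (Submodule.span_le.2 ?_) fun v ⟨hN, hs⟩ => ?_
  · rintro _ ⟨k, α, hα, hdeg, rfl⟩
    exact ⟨Submodule.subset_span ⟨k, α, hα, rfl⟩, hdeg ▸ termV_mem_homogCompV d α k⟩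
  · exact mem_of_forall_termV_mem _ fun k β hβ => Submodule.subset_span
      ⟨k, β, fun hJ => hβ (mem_span_NUTerms_iff.1 hN k β hJ),
        hs k β (MvPolynomial.mem_support_iff.2 hβ), rfl⟩

end FreeModule

def multMultiples {κ : Type*} {A : Type*} [CommRing A] (P : κ → Finset (Exp n))
    (g : Exp n → κ → (κ → MvPolynomial (Fin (n+1)) A)) (D : Set (Exp n)) :
    Set (κ → MvPolynomial (Fin (n+1)) A) :=
  {v | ∃ k, ∃ α ∈ P k, ∃ δ ∈ D, multExp α δ ∧ v = monomial δ (1:A) • g α k}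

section MarkedSet

variable {κ : Type*} {A : Type*} [CommRing A] {d : κ → ℤ} {J : κ → Set (Exp n)}
  {P : κ → Finset (Exp n)} {g : Exp n → κ → (κ → MvPolynomial (Fin (n+1)) A)}

lemma GSdeg_subset_multMultiples (s : ℤ) : GSdeg d P g s ⊆ multMultiples P g Set.univ := by
  rintro _ ⟨k, α, hα, δ, hm, -, rfl⟩
  exact ⟨k, α, hα, δ, trivial, hm, rfl⟩

lemma IsMarkedSetV.coeff_ne_zero [DecidableEq κ] (hG : IsMarkedSetV d J P g) {k : κ} {α : Exp n}
    (hα : α ∈ P k) {l : κ} {β : Exp n} (h : ((g α k) l).coeff β ≠ 0) :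
    (l = k ∧ β = α) ∨ β ∉ J l := by
  by_cases htail : ((g α k - termV A α k) l).coeff β = 0
  · left
    have : ((termV A α k) l).coeff β ≠ 0 := by
      simpa [sub_eq_zero.1 (by simpa using htail)] using h
    rw [coeff_termV] at this
    split_ifs at this with hlk
    · exact hlk
    · exact absurd rfl this
  · exact Or.inr (hG k α hα l β (MvPolynomial.mem_support_iff.2 htail)).1

lemma IsMarkedSetV.coeff_self [DecidableEq κ] (hP : ∀ k, IsPommaretBasis (P k) (J k))
    (hG : IsMarkedSetV d J P g) {k : κ} {α : Exp n} (hα : α ∈ P k) :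
    ((g α k) k).coeff α = 1 := by
  have htail : ((g α k - termV A α k) k).coeff α = 0 := by
    by_contra h
    exact (hG k α hα k α (MvPolynomial.mem_support_iff.2 h)).1 ((hP k).mem hα)
  have : ((g α k) k).coeff α = ((termV A α k) k).coeff α := by
    simpa [sub_eq_zero] using htail
  rw [this, coeff_termV, if_pos ⟨rfl, rfl⟩]

lemma IsMarkedSetV.mem_homogCompV [DecidableEq κ] (hG : IsMarkedSetV d J P g) {k : κ}
    {α : Exp n} (hα : α ∈ P k) : g α k ∈ homogCompV A d (degE α + d k) := by
  rw [← add_sub_cancel (termV A α k) (g α k)]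
  exact add_mem (termV_mem_homogCompV d α k) fun l β hβ => (hG k α hα l β hβ).2

lemma span_GSdeg_le_GmodDeg [DecidableEq κ] (hG : IsMarkedSetV d J P g) (s : ℤ) :
    Submodule.span A (GSdeg d P g s) ≤ GmodDeg d P g s := by
  rw [Submodule.span_le]
  rintro _ ⟨k, α, hα, δ, -, hdeg, rfl⟩
  refine ⟨Submodule.smul_mem (GmodS P g) _ (Submodule.subset_span ⟨k, α, hα, rfl⟩), ?_⟩
  have := monomial_smul_mem_homogCompV δ (hG.mem_homogCompV hα)
  rwa [← add_assoc, hdeg] at this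

/-- A tail term of `g_{α'}` lies outside `U`, so it reaches the term `x^{δ+α}` of `U` only with a
multiplier colex-larger than `δ`; the head term reaches it only inside the same Pommaret cone. -/
lemma eq_of_coeff_monomial_smul_ne_zero [DecidableEq κ] (hJ : ∀ k, IsMonomialIdeal (J k))
    (hP : ∀ k, IsPommaretBasis (P k) (J k)) (hG : IsMarkedSetV d J P g)
    {k k' : κ} {α α' δ δ' : Exp n} (hα : α ∈ P k) (hm : multExp α δ) (hα' : α' ∈ P k')
    (hm' : multExp α' δ') (hle : toColex δ' ≤ toColex δ)
    (h : ((monomial δ' (1:A) • g α' k') k).coeff (δ + α) ≠ 0) :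
    k' = k ∧ α' = α ∧ δ' = δ := by
  obtain ⟨β, hβ, hsum⟩ := exists_eq_add_of_coeff_monomial_smul_ne_zero h
  rcases hG.coeff_ne_zero hα' hβ with ⟨rfl, hβα⟩ | hβJ
  · rw [hβα] at hsum
    have hcone' : δ + α ∈ pommaretCone α' := ⟨δ', hm', by rw [hsum, add_comm]⟩
    obtain rfl : α' = α := (hP k).2 _ _ hα' _ hα hcone' ⟨δ, hm, add_comm _ _⟩
    exact ⟨rfl, rfl, (add_right_cancel hsum).symm⟩
  · exact absurd hle (not_le.2
      (toColex_lt_of_add_eq_of_notMem (hJ k) ((hP k).mem hα) hsum.symm hm hβJ))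

lemma exists_head_of_mem_span_multMultiples [DecidableEq κ] (hJ : ∀ k, IsMonomialIdeal (J k))
    (hP : ∀ k, IsPommaretBasis (P k) (J k)) (hG : IsMarkedSetV d J P g)
    {v : κ → MvPolynomial (Fin (n+1)) A} (hv : v ∈ Submodule.span A (multMultiples P g Set.univ))
    (hv0 : v ≠ 0) :
    ∃ k, ∃ α ∈ P k, ∃ δ, multExp α δ ∧ (v k).coeff (δ + α) ≠ 0 ∧
      v ∈ Submodule.span A (multMultiples P g {δ' | toColex δ' ≤ toColex δ}) := by
  classical
  obtain ⟨c, hc, rfl⟩ := Submodule.mem_span_set.1 hv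
  have hsupp : ∀ w ∈ c.support, ∃ k, ∃ α ∈ P k, ∃ δ, multExp α δ ∧
      w = monomial δ (1:A) • g α k := fun w hw => by
    obtain ⟨k, α, hα, δ, -, hm, rfl⟩ := hc hw
    exact ⟨k, α, hα, δ, hm, rfl⟩
  have hne : c.support.Nonempty := Finsupp.support_nonempty_iff.2 (by rintro rfl; simp at hv0)
  have : Nonempty κ := let ⟨w, hw⟩ := hne; let ⟨k, _⟩ := hsupp w hw; ⟨k⟩
  choose! kf af hPf df hmf hEf using hsupp
  obtain ⟨w₀, hw₀, hmax⟩ := Finset.exists_max_image c.support (fun w => toColex (df w)) hne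
  refine ⟨kf w₀, af w₀, hPf w₀ hw₀, df w₀, hmf w₀ hw₀, ?_, ?_⟩
  · have hhead : ((w₀ (kf w₀)).coeff (df w₀ + af w₀)) = 1 := by
      have h := coeff_monomial_smul_add (df w₀) (af w₀) (g (af w₀) (kf w₀)) (kf w₀)
      rwa [← hEf w₀ hw₀, hG.coeff_self hP (hPf w₀ hw₀)] at h
    have hother : ∀ w ∈ c.support, w ≠ w₀ → (w (kf w₀)).coeff (df w₀ + af w₀) = 0 :=
      fun w hw hww₀ => by
        by_contra h
        rw [hEf w hw] at h
        obtain ⟨hk, hα, hδ⟩ := eq_of_coeff_monomial_smul_ne_zero hJ hP hG (hPf w₀ hw₀)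
          (hmf w₀ hw₀) (hPf w hw) (hmf w hw) (hmax w hw) h
        exact hww₀ (by rw [hEf w hw, hEf w₀ hw₀, hk, hα, hδ])
    simp only [Finsupp.sum, Finset.sum_apply, Pi.smul_apply, coeff_sum, coeff_smul]
    rw [Finset.sum_eq_single w₀ (fun w hw hww₀ => by rw [hother w hw hww₀, smul_zero])
      (fun h => absurd hw₀ h), hhead, smul_eq_mul, mul_one]
    exact Finsupp.mem_support_iff.1 hw₀
  · refine Submodule.sum_mem _ fun w hw => Submodule.smul_mem _ _ (Submodule.subset_span ?_)
    exact ⟨kf w, af w, hPf w hw, df w, hmax w hw, hmf w hw, hEf w hw⟩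

theorem eq_zero_of_mem_span_multMultiples_of_mem_span_NUTerms [Fintype κ] [DecidableEq κ]
    (hJ : ∀ k, IsMonomialIdeal (J k)) (hP : ∀ k, IsPommaretBasis (P k) (J k))
    (hG : IsMarkedSetV d J P g) {v : κ → MvPolynomial (Fin (n+1)) A}
    (hv : v ∈ Submodule.span A (multMultiples P g Set.univ))
    (hN : v ∈ Submodule.span A (NUTerms A J)) : v = 0 := by
  by_contra hv0
  obtain ⟨k, α, hα, δ, -, hcoeff, -⟩ := exists_head_of_mem_span_multMultiples hJ hP hG hv hv0
  exact hcoeff (mem_span_NUTerms_iff.1 hN k _ (add_comm α δ ▸ hJ k α ((hP k).mem hα) δ))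

lemma termV_mem_span_GSdeg_sup [Fintype κ] [DecidableEq κ] (hJ : ∀ k, IsMonomialIdeal (J k))
    (hP : ∀ k, IsPommaretBasis (P k) (J k)) (hG : IsMarkedSetV d J P g) (s : ℤ) (δ : Exp n) :
    ∀ k, ∀ α ∈ P k, multExp α δ → (degE (δ + α) : ℤ) + d k = s →
      termV A (δ + α) k ∈
        Submodule.span A (GSdeg d P g s) ⊔ Submodule.span A (NUTermsDeg A d J s) := by
  induction δ using wellFounded_toColex.induction with
  | _ δ IH =>
  intro k α hα hm hdeg
  rw [degE_add] at hdeg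
  have hgen : monomial δ (1:A) • g α k ∈ GSdeg d P g s :=
    ⟨k, α, hα, δ, hm, by push_cast at hdeg; omega, rfl⟩
  rw [← monomial_smul_termV, ← sub_sub_cancel (g α k) (termV A α k), smul_sub]
  refine sub_mem (Submodule.mem_sup_left (Submodule.subset_span hgen))
    (mem_of_forall_termV_mem _ fun l γ hγ => ?_)
  obtain ⟨β, hβ, rfl⟩ := exists_eq_add_of_coeff_monomial_smul_ne_zero hγ
  obtain ⟨hβJ, hβdeg⟩ := hG k α hα l β (MvPolynomial.mem_support_iff.2 hβ)
  have hdeg' : (degE (δ + β) : ℤ) + d l = s := by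
    rw [degE_add]
    push_cast at hdeg ⊢
    omega
  by_cases hJl : δ + β ∈ J l
  · obtain ⟨α', hα', δ', hm', he⟩ := ((hP l).1 _).1 hJl
    rw [add_comm α'] at he
    have hlt := toColex_lt_of_add_eq_of_notMem (hJ l) ((hP l).mem hα') he hm' hβJ
    simpa [he] using IH δ' hlt l α' hα' hm' (he ▸ hdeg')
  · exact Submodule.mem_sup_right (Submodule.subset_span ⟨l, δ + β, hJl, hdeg', rfl⟩)

theorem homogCompV_le_span_GSdeg_sup [Fintype κ] [DecidableEq κ]
    (hJ : ∀ k, IsMonomialIdeal (J k)) (hP : ∀ k, IsPommaretBasis (P k) (J k))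
    (hG : IsMarkedSetV d J P g) (s : ℤ) :
    homogCompV A d s ≤
      Submodule.span A (GSdeg d P g s) ⊔ Submodule.span A (NUTermsDeg A d J s) := by
  intro v hv
  refine mem_of_forall_termV_mem _ fun k β hβ => ?_
  have hdeg := hv k β (MvPolynomial.mem_support_iff.2 hβ)
  by_cases hβJ : β ∈ J k
  · obtain ⟨α, hα, δ, hm, rfl⟩ := ((hP k).1 β).1 hβJ
    rw [add_comm α δ] at hdeg ⊢
    exact termV_mem_span_GSdeg_sup hJ hP hG s δ k α hα hm hdeg
  · exact Submodule.mem_sup_right (Submodule.subset_span ⟨k, β, hβJ, hdeg, rfl⟩)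

lemma mem_span_GSdeg_of_mem_span_multMultiples [Fintype κ] [DecidableEq κ]
    (hJ : ∀ k, IsMonomialIdeal (J k)) (hP : ∀ k, IsPommaretBasis (P k) (J k))
    (hG : IsMarkedSetV d J P g) {s : ℤ} {v : κ → MvPolynomial (Fin (n+1)) A}
    (hv : v ∈ Submodule.span A (multMultiples P g Set.univ)) (hs : v ∈ homogCompV A d s) :
    v ∈ Submodule.span A (GSdeg d P g s) := by
  obtain ⟨w, hw, u, hu, rfl⟩ := Submodule.mem_sup.1 (homogCompV_le_span_GSdeg_sup hJ hP hG s hs)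
  have hu0 : u = 0 := by
    refine eq_zero_of_mem_span_multMultiples_of_mem_span_NUTerms hJ hP hG ?_
      (Submodule.span_mono (NUTermsDeg_subset_NUTerms d J s) hu)
    simpa using sub_mem hv (Submodule.span_mono (GSdeg_subset_multMultiples s) hw)
  simpa [hu0] using hw

lemma GmodDeg_le_span_GSdeg_of_inf_eq_bot [Fintype κ] [DecidableEq κ]
    (hJ : ∀ k, IsMonomialIdeal (J k)) (hP : ∀ k, IsPommaretBasis (P k) (J k))
    (hG : IsMarkedSetV d J P g) {s : ℤ}
    (h : GmodDeg d P g s ⊓ Submodule.span A (NUTermsDeg A d J s) = ⊥) :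
    GmodDeg d P g s ≤ Submodule.span A (GSdeg d P g s) := by
  intro v hv
  obtain ⟨w, hw, u, hu, rfl⟩ :=
    Submodule.mem_sup.1 (homogCompV_le_span_GSdeg_sup hJ hP hG s hv.2)
  have hu0 : u ∈ GmodDeg d P g s ⊓ Submodule.span A (NUTermsDeg A d J s) :=
    ⟨by simpa using sub_mem hv (span_GSdeg_le_GmodDeg hG s hw), hu⟩
  rw [h, Submodule.mem_bot] at hu0
  simpa [hu0] using hw

lemma inf_eq_bot_of_GmodDeg_le_span_GSdeg [Fintype κ] [DecidableEq κ]
    (hJ : ∀ k, IsMonomialIdeal (J k)) (hP : ∀ k, IsPommaretBasis (P k) (J k))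
    (hG : IsMarkedSetV d J P g) {s : ℤ}
    (h : GmodDeg d P g s ≤ Submodule.span A (GSdeg d P g s)) :
    GmodDeg d P g s ⊓ Submodule.span A (NUTermsDeg A d J s) = ⊥ :=
  eq_bot_iff.2 fun _ ⟨hv, hN⟩ => eq_zero_of_mem_span_multMultiples_of_mem_span_NUTerms hJ hP hG
    (Submodule.span_mono (GSdeg_subset_multMultiples s) (h hv))
    (Submodule.span_mono (NUTermsDeg_subset_NUTerms d J s) hN)

theorem markedBasisProp_of_forall_GmodDeg_le [Fintype κ] [DecidableEq κ]
    (hJ : ∀ k, IsMonomialIdeal (J k)) (hP : ∀ k, IsPommaretBasis (P k) (J k))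
    (hG : IsMarkedSetV d J P g)
    (h : ∀ s, GmodDeg d P g s ≤ Submodule.span A (GSdeg d P g s)) : MarkedBasisProp d J P g :=
  fun s => ⟨le_antisymm
    ((homogCompV_le_span_GSdeg_sup hJ hP hG s).trans
      (sup_le_sup_right (span_GSdeg_le_GmodDeg hG s) _))
    (sup_le inf_le_right ((span_NUTermsDeg_eq d J s).trans_le inf_le_right)),
    inf_eq_bot_of_GmodDeg_le_span_GSdeg hJ hP hG (h s)⟩

lemma toColex_lt_single_of_coeff_ne_zero [DecidableEq κ] (hJ : ∀ k, IsMonomialIdeal (J k))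
    (hP : ∀ k, IsPommaretBasis (P k) (J k)) (hG : IsMarkedSetV d J P g) {k k₀ : κ}
    {α α₀ δ₀ : Exp n} {j : Fin (n+1)} (hα : α ∈ P k) (hj : ¬ mult α j) (hα₀ : α₀ ∈ P k₀)
    (hm₀ : multExp α₀ δ₀)
    (h : ((monomial (Finsupp.single j 1) (1:A) • g α k) k₀).coeff (δ₀ + α₀) ≠ 0) :
    toColex δ₀ < toColex (Finsupp.single j 1) := by
  obtain ⟨β, hβ, hsum⟩ := exists_eq_add_of_coeff_monomial_smul_ne_zero h
  rcases hG.coeff_ne_zero hα hβ with ⟨rfl, rfl⟩ | hβJ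
  · exact (hP k₀).toColex_lt_single hα hα₀ hj hm₀ hsum.symm
  · exact toColex_lt_of_add_eq_of_notMem (hJ k₀) ((hP k₀).mem hα₀) hsum.symm hm₀ hβJ

/-- Colex induction on `δ`: split off a non-multiplicative `x_j` of `x^δ`; the multipliers in an
expansion of `x_j g_α e_k` are colex-below `x_j`, so the new multipliers are colex-below `δ`. -/
theorem monomial_smul_mem_span_multMultiples [DecidableEq κ] (hJ : ∀ k, IsMonomialIdeal (J k))
    (hP : ∀ k, IsPommaretBasis (P k) (J k)) (hG : IsMarkedSetV d J P g)
    (hX : ∀ k, ∀ α ∈ P k, ∀ j, ¬ mult α j →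
      monomial (Finsupp.single j 1) (1:A) • g α k ∈ Submodule.span A (multMultiples P g Set.univ))
    (δ : Exp n) :
    ∀ k, ∀ α ∈ P k, monomial δ (1:A) • g α k ∈ Submodule.span A (multMultiples P g Set.univ) := by
  induction δ using wellFounded_toColex.induction with
  | _ δ IH =>
  intro k α hα
  by_cases hm : multExp α δ
  · exact Submodule.subset_span ⟨k, α, hα, δ, trivial, hm, rfl⟩
  obtain ⟨j, hj, hjm⟩ : ∃ j ∈ δ.support, ¬ mult α j := by simpa [multExp] using hm
  have hsplit : monomial δ (1:A) • g α k = monomial (δ - Finsupp.single j 1) (1:A) •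
      (monomial (Finsupp.single j 1) (1:A) • g α k) := by
    rw [smul_smul, monomial_mul, one_mul, tsub_add_cancel_of_le
      (Finsupp.single_le_iff.2 (Nat.one_le_iff_ne_zero.2 (Finsupp.mem_support_iff.1 hj)))]
  rw [hsplit]
  by_cases h0 : monomial (Finsupp.single j 1) (1:A) • g α k = 0
  · simp [h0]
  obtain ⟨k₀, α₀, hα₀, δ₀, hm₀, hcoeff, hspan⟩ :=
    exists_head_of_mem_span_multMultiples hJ hP hG (hX k α hα j hjm) h0
  have hlt := toColex_lt_single_of_coeff_ne_zero hJ hP hG hα hjm hα₀ hm₀ hcoeff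
  generalize monomial (Finsupp.single j 1) (1:A) • g α k = v at hspan ⊢
  induction hspan using Submodule.span_induction with
  | mem w hw =>
    obtain ⟨k', α', hα', δ', hle, -, rfl⟩ := hw
    rw [smul_smul, monomial_mul, one_mul]
    exact IH _ (toColex_tsub_single_add_lt hj (lt_of_le_of_lt hle hlt)) k' α' hα'
  | zero => simp
  | add x y _ _ hx hy => simpa [smul_add] using add_mem hx hy
  | smul a x _ hx => simpa [smul_comm _ a] using Submodule.smul_mem _ a hx

lemma GmodS_le_span_multMultiples [DecidableEq κ] (hJ : ∀ k, IsMonomialIdeal (J k))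
    (hP : ∀ k, IsPommaretBasis (P k) (J k)) (hG : IsMarkedSetV d J P g)
    (hX : ∀ k, ∀ α ∈ P k, ∀ j, ¬ mult α j →
      monomial (Finsupp.single j 1) (1:A) • g α k ∈ Submodule.span A (multMultiples P g Set.univ)) :
    (GmodS P g).restrictScalars A ≤ Submodule.span A (multMultiples P g Set.univ) := by
  rw [GmodS, ← Submodule.span_smul_of_span_eq_top (basisMonomials (Fin (n+1)) A).span_eq,
    Submodule.span_le]
  rintro _ ⟨_, ⟨δ, rfl⟩, _, ⟨k, α, hα, rfl⟩, rfl⟩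
  simpa using monomial_smul_mem_span_multMultiples hJ hP hG hX δ k α hα

end MarkedSet

section Saturated

variable {κ : Type*} [Fintype κ] [DecidableEq κ] {A : Type*} [CommRing A]
  {d : κ → ℤ} {J : κ → Set (Exp n)} {P : κ → Finset (Exp n)}
  {g : Exp n → κ → (κ → MvPolynomial (Fin (n+1)) A)}

lemma inf_span_NUTerms_inf_homogCompV (s : ℤ) :
    (GmodS P g).restrictScalars A ⊓ Submodule.span A (NUTerms A J) ⊓ homogCompV A d s =
      GmodDeg d P g s ⊓ Submodule.span A (NUTermsDeg A d J s) := by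
  rw [GmodDeg, span_NUTermsDeg_eq, inf_inf_inf_comm, inf_idem]

/-- Multiplying by `x_0^{r-s}` embeds `N(U,⟨G⟩)_s` into `N(U,⟨G⟩)_r`: a term `x_0^{r-s} x^β`
lying in `U` would put `x^β` in the saturation of `U`. -/
lemma inf_span_NUTermsDeg_eq_bot_of_le (hJ : ∀ k, IsMonomialIdeal (J k))
    (hP : ∀ k, IsPommaretBasis (P k) (J k)) (hsat : ∀ k, J k = satTerms (J k)) {r s : ℤ}
    (hs : s ≤ r) (h : GmodDeg d P g r ⊓ Submodule.span A (NUTermsDeg A d J r) = ⊥) :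
    GmodDeg d P g s ⊓ Submodule.span A (NUTermsDeg A d J s) = ⊥ := by
  rw [← inf_span_NUTerms_inf_homogCompV] at h ⊢
  rw [eq_bot_iff]
  rintro v ⟨⟨hvG, hvN⟩, hvs⟩
  obtain ⟨t, ht⟩ : ∃ t : ℕ, (t : ℤ) = r - s := ⟨(r - s).toNat, by omega⟩
  set x₀t : Exp n := Finsupp.single 0 t
  have hr : monomial x₀t (1:A) • v ∈ homogCompV A d r := by
    have := monomial_smul_mem_homogCompV x₀t hvs
    rwa [degE_eq_degree, Finsupp.degree_single, ht, sub_add_cancel] at this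
  have hN : monomial x₀t (1:A) • v ∈ Submodule.span A (NUTerms A J) := by
    refine mem_span_NUTerms_iff.2 fun k γ hγ => ?_
    by_contra hne
    obtain ⟨β, hβ, rfl⟩ := exists_eq_add_of_coeff_monomial_smul_ne_zero hne
    refine hβ (mem_span_NUTerms_iff.1 hvN k β ?_)
    rw [hsat k]
    exact mem_satTerms_of_add_single_zero_mem (hJ k) (hP k) (add_comm _ β ▸ hγ)
  have h0 : monomial x₀t (1:A) • v ∈
      (GmodS P g).restrictScalars A ⊓ Submodule.span A (NUTerms A J) ⊓ homogCompV A d r :=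
    ⟨⟨Submodule.smul_mem (GmodS P g) _ hvG, hN⟩, hr⟩
  rw [h, Submodule.mem_bot] at h0
  funext k
  ext β
  have := coeff_monomial_smul_add x₀t β v k
  rw [h0] at this
  simpa using this.symm

theorem forall_GmodDeg_le_span_GSdeg (hJ : ∀ k, IsMonomialIdeal (J k))
    (hP : ∀ k, IsPommaretBasis (P k) (J k)) (hsat : ∀ k, J k = satTerms (J k))
    (hG : IsMarkedSetV d J P g) {r : ℤ} (hub : ∀ k, ∀ α ∈ P k, (degE α : ℤ) + d k ≤ r)
    (h : GmodDeg d P g (r + 1) ⊓ Submodule.span A (NUTermsDeg A d J (r + 1)) = ⊥) (s : ℤ) :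
    GmodDeg d P g s ≤ Submodule.span A (GSdeg d P g s) := by
  have hX : ∀ k, ∀ α ∈ P k, ∀ j, ¬ mult α j → monomial (Finsupp.single j 1) (1:A) • g α k ∈
      Submodule.span A (multMultiples P g Set.univ) := fun k α hα j _ => by
    have hmem : monomial (Finsupp.single j 1) (1:A) • g α k ∈
        GmodDeg d P g (degE (Finsupp.single j 1) + (degE α + d k)) :=
      ⟨Submodule.smul_mem (GmodS P g) _ (Submodule.subset_span ⟨k, α, hα, rfl⟩),
        monomial_smul_mem_homogCompV _ (hG.mem_homogCompV hα)⟩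
    refine Submodule.span_mono (GSdeg_subset_multMultiples _)
      (GmodDeg_le_span_GSdeg_of_inf_eq_bot hJ hP hG
        (inf_span_NUTermsDeg_eq_bot_of_le hJ hP hsat ?_ h) hmem)
    have := hub k α hα
    rw [degE_eq_degree, Finsupp.degree_single]
    omega
  exact fun v hv => mem_span_GSdeg_of_mem_span_multMultiples hJ hP hG
    (GmodS_le_span_multMultiples hJ hP hG hX hv.1) hv.2

end Saturated

theorem statement10_general {n : ℕ} {κ : Type*} [Fintype κ] [DecidableEq κ]
    {A : Type*} [CommRing A]
    (d : κ → ℤ) (J : κ → Set (Exp n)) (P : κ → Finset (Exp n))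
    (hQS : ∀ k, IsMonomialIdeal (J k) ∧ IsPommaretBasis (P k) (J k))
    (hsat : ∀ k, J k = satTerms (J k))
    (gb : Exp n → κ → (κ → MvPolynomial (Fin (n+1)) A))
    (hG : IsMarkedSetV d J P gb)
    (r : ℤ) (hub : ∀ k, ∀ α ∈ P k, (degE α : ℤ) + d k ≤ r) :
    (MarkedBasisProp d J P gb ↔
      (GmodS P gb).restrictScalars A ⊓ Submodule.span A (NUTerms A J)
        ⊓ homogCompV A d (r + 1) = ⊥) ∧
    (((GmodS P gb).restrictScalars A ⊓ Submodule.span A (NUTerms A J)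
        ⊓ homogCompV A d (r + 1) = ⊥) ↔
      GmodDeg d P gb (r + 1) = Submodule.span A (GSdeg d P gb (r + 1))) := by
  have hJ k := (hQS k).1
  have hP k := (hQS k).2
  have key := forall_GmodDeg_le_span_GSdeg hJ hP hsat hG hub
  rw [inf_span_NUTerms_inf_homogCompV]
  exact ⟨⟨fun hMB => (hMB (r + 1)).2,
      fun hX => markedBasisProp_of_forall_GmodDeg_le hJ hP hG (key hX)⟩,
    ⟨fun hX => le_antisymm (key hX _) (span_GSdeg_le_GmodDeg hG _),
      fun h => inf_eq_bot_of_GmodDeg_le_span_GSdeg hJ hP hG h.le⟩⟩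

/-- if all the ideals `J^(k)` are saturated, then it suffices to check the
marked-basis conditions in the single degree `reg(U) + 1`. -/
theorem statement10 {n : ℕ} {κ : Type*} [Fintype κ] [DecidableEq κ] (hm : Nonempty κ)
    {A : Type*} [CommRing A] [IsNoetherianRing A]
    (d : κ → ℤ) (J : κ → Set (Exp n)) (P : κ → Finset (Exp n))
    (hQS : ∀ k, IsMonomialIdeal (J k) ∧ IsPommaretBasis (P k) (J k))
    (hsat : ∀ k, J k = satTerms (J k))
    (gb : Exp n → κ → (κ → MvPolynomial (Fin (n+1)) A))
    (hG : IsMarkedSetV d J P gb)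
    (r : ℤ) (hub : ∀ k, ∀ α ∈ P k, (degE α : ℤ) + d k ≤ r)
    (hatt : ∃ k, ∃ α ∈ P k, (degE α : ℤ) + d k = r) :
    (MarkedBasisProp d J P gb ↔
      (GmodS P gb).restrictScalars A ⊓ Submodule.span A (NUTerms A J)
        ⊓ homogCompV A d (r + 1) = ⊥) ∧
    (((GmodS P gb).restrictScalars A ⊓ Submodule.span A (NUTerms A J)
        ⊓ homogCompV A d (r + 1) = ⊥) ↔
      GmodDeg d P gb (r + 1) = Submodule.span A (GSdeg d P gb (r + 1))) :=
  statement10_general d J P hQS hsat gb hG r hub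

end MB
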